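/- Let G = (V, E) be a hypergraph. Then the following three subsets of ℝ^{E∪S} are equal: (i) the extended flower relaxation flowerRel(G); (ii) the intersection of the projected relaxations P_E(D) over all recursive linearizations D of G; (iii) the intersection of the projected relaxations P_E(D) over all recursive McCormick linearizations D of G. -/

import Mathlib

open Finset

/-- A set `I` is a singleton `{v}`. -/
def IsSingleton {V : Type} (I : Finset V) : Prop := ∃ v : V, I = {v}

instance {V : Type} [DecidableEq V] [Fintype V] (I : Finset V) :
    Decidable (IsSingleton I) :=
  inferInstanceAs (Decidable (∃ v : V, I = {v}))

/-- The successors of node `I` in the arc set `A`. -/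
def succOf {V : Type} [DecidableEq V] (A : Finset (Finset V × Finset V))
    (I : Finset V) : Finset (Finset V) :=
  (A.filter fun a => a.1 = I).image Prod.snd

/-- A recursive linearization over the finite ground set `V`: a simple digraph whose
nodes are nonempty subsets of `V` including all singletons, where each arc goes from a
set to a subset, and the successors of every non-singleton node cover it. -/
structure RecLin (V : Type) [Fintype V] [DecidableEq V] where
  nodes : Finset (Finset V)
  arcs : Finset (Finset V × Finset V)
  arcs_fst_mem : ∀ a ∈ arcs, a.1 ∈ nodes
  arcs_snd_mem : ∀ a ∈ arcs, a.2 ∈ nodes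
  no_loops : ∀ a ∈ arcs, a.1 ≠ a.2
  singleton_mem : ∀ v : V, ({v} : Finset V) ∈ nodes
  nodes_nonempty : ∀ I ∈ nodes, I.Nonempty
  arcs_subset : ∀ a ∈ arcs, a.2 ⊆ a.1
  succ_union : ∀ I ∈ nodes, ¬ IsSingleton I → (succOf arcs I).biUnion id = I

/-- The relaxation `P(D)` of a recursive linearization, as a subset of `ℝ^{Finset V}`
constraining only the coordinates indexed by nodes of `D`. -/
def relax {V : Type} [Fintype V] [DecidableEq V] (D : RecLin V) :
    Set (Finset V → ℝ) :=
  { z | (∀ I ∈ D.nodes, 0 ≤ z I ∧ z I ≤ 1)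
      ∧ (∀ a ∈ D.arcs, z a.1 ≤ z a.2)
      ∧ (∀ I ∈ D.nodes, ¬ IsSingleton I →
          z I + ∑ J ∈ succOf D.arcs I, (1 - z J) ≥ 1) }

/-- The projected relaxation `P_T(D)`: the orthogonal projection of `P(D)` onto the
coordinates indexed by `T ∪ S` (`S` = singletons). -/
def projRelax {V : Type} [Fintype V] [DecidableEq V] (D : RecLin V)
    (T : Finset (Finset V)) : Set (Finset V → ℝ) :=
  { z | ∃ w ∈ relax D, ∀ I : Finset V, (I ∈ T ∨ IsSingleton I) → w I = z I }

/-- `D` is a recursive linearization of the hypergraph `G = (V, E)`. -/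
def RecLinOf {V : Type} [Fintype V] [DecidableEq V] (D : RecLin V)
    (E : Finset (Finset V)) : Prop :=
  E ⊆ D.nodes ∧ ∀ I ∈ D.nodes, (∀ a ∈ D.arcs, a.2 ≠ I) → (I ∈ E ∨ IsSingleton I)

/-- `D` is partitioning: the successors of every node are pairwise disjoint. -/
def Partitioning {V : Type} [Fintype V] [DecidableEq V] (D : RecLin V) : Prop :=
  ∀ I ∈ D.nodes, ∀ J ∈ succOf D.arcs I, ∀ J' ∈ succOf D.arcs I, J ≠ J' → J ∩ J' = ∅

/-- `D` is binary: every non-singleton node has exactly two successors. -/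
def Binary {V : Type} [Fintype V] [DecidableEq V] (D : RecLin V) : Prop :=
  ∀ I ∈ D.nodes, ¬ IsSingleton I → (succOf D.arcs I).card = 2

/-- A recursive McCormick linearization is partitioning and binary. -/
def McCormick {V : Type} [Fintype V] [DecidableEq V] (D : RecLin V) : Prop :=
  Partitioning D ∧ Binary D

/-- The extended flower relaxation of the hypergraph `G = (V, E)`, as a subset of
`ℝ^{Finset V}` constraining only the coordinates indexed by `E ∪ S`. -/
def flowerRel {V : Type} [Fintype V] [DecidableEq V] (E : Finset (Finset V)) :
    Set (Finset V → ℝ) :=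
  { z | (∀ I : Finset V, (I ∈ E ∨ IsSingleton I) → 0 ≤ z I ∧ z I ≤ 1)
      ∧ (∀ I ∈ E, ∀ v ∈ I, z I ≤ z {v})
      ∧ (∀ I ∈ E, ∀ k : ℕ, ∀ J : Fin k → Finset V,
          (∀ i, J i ∈ E ∨ IsSingleton (J i)) →
          I ⊆ Finset.univ.biUnion J →
          (∀ i, (J i ∩ I).Nonempty) →
          z I + ∑ i, (1 - z (J i)) ≥ 1) }

/-- The multilinear polytope `ML(G)`: the convex hull of the 0/1 points whose
`E`-coordinates are the products of the corresponding singleton coordinates. -/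
def ML {V : Type} [Fintype V] [DecidableEq V] (E : Finset (Finset V)) :
    Set (Finset V → ℝ) :=
  convexHull ℝ { z : Finset V → ℝ |
    (∀ I : Finset V, (I ∈ E ∨ IsSingleton I) → z I = 0 ∨ z I = 1)
    ∧ ∀ I ∈ E, z I = ∏ v ∈ I, z {v} }

/-!
A point `z` of the flower relaxation extends to all sets: give `I` the best flower bound
`1 - ∑_{J ∈ F} (1 - z J)` over the covers `F` of `I` by edges and singletons meeting `I`
(or `0`). Restricting covers to a subset shows monotonicity along arcs, and the union of
optimal covers of the successors of `I` is a cover of `I`, which gives the node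
inequalities; so the extension lies in `P(D)` for every recursive linearization `D`.

Conversely, each flower inequality centred at `I` with neighbours `J i` already holds on
one recursive McCormick linearization `D`. Cut `I` into disjoint pieces `K i ⊆ J i` and let
every node split off a piece of `K` that it cuts properly. For a lift `w ∈ P(D)` of `z`,
the McCormick inequalities along the splitting of `I` give `w I ≥ 1 - ∑ (1 - w (K i))`,
and the arcs leading from `J i` down to `K i` give `w (K i) ≥ w (J i)`.
-/

lemma Finset.sum_biUnion_le_sum_sum {ι α : Type*} [DecidableEq α] {s : Finset ι}
    {t : ι → Finset α} {f : α → ℝ} (hf : ∀ a ∈ s.biUnion t, 0 ≤ f a) :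
    ∑ a ∈ s.biUnion t, f a ≤ ∑ i ∈ s, ∑ a ∈ t i, f a := by
  have himage : s.biUnion t = (s.sigma t).image Sigma.snd := by
    ext a; simp
  rw [sum_sigma', himage]
  exact sum_image_le_of_nonneg (himage ▸ hf)

section

variable {V : Type}

lemma isSingleton_iff_card_eq_one {I : Finset V} : IsSingleton I ↔ I.card = 1 :=
  card_eq_one.symm

lemma one_lt_card_iff_not_isSingleton {I : Finset V} (hI : I.Nonempty) :
    1 < I.card ↔ ¬ IsSingleton I := by
  have := hI.card_pos
  rw [isSingleton_iff_card_eq_one]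
  omega

lemma mem_succOf [DecidableEq V] {A : Finset (Finset V × Finset V)}
    {I J : Finset V} : J ∈ succOf A I ↔ (I, J) ∈ A := by
  simp [succOf]

end

section FlowerExtension

variable {V : Type} [Fintype V] [DecidableEq V] (E : Finset (Finset V))

def flowerCovers (I : Finset V) : Finset (Finset (Finset V)) :=
  univ.filter fun F => (∀ J ∈ F, J ∈ E ∨ IsSingleton J) ∧ I ⊆ F.biUnion id ∧
    ∀ J ∈ F, (J ∩ I).Nonempty

def flowerValue (z : Finset V → ℝ) (F : Finset (Finset V)) : ℝ :=
  1 - ∑ J ∈ F, (1 - z J)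

noncomputable def flowerExt (z : Finset V → ℝ) (I : Finset V) : ℝ :=
  (flowerCovers E I).fold max 0 (flowerValue z)

variable {E} {z : Finset V → ℝ} {I : Finset V} {F : Finset (Finset V)}

@[simp]
lemma mem_flowerCovers : F ∈ flowerCovers E I ↔
    (∀ J ∈ F, J ∈ E ∨ IsSingleton J) ∧ I ⊆ F.biUnion id ∧ ∀ J ∈ F, (J ∩ I).Nonempty := by
  simp [flowerCovers]

lemma flowerValue_le_flowerExt (hF : F ∈ flowerCovers E I) : flowerValue z F ≤ flowerExt E z I :=
  le_fold_max _ |>.mpr <| .inr ⟨F, hF, le_rfl⟩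

lemma flowerExt_nonneg : 0 ≤ flowerExt E z I :=
  le_fold_max _ |>.mpr <| .inl le_rfl

lemma exists_flowerExt_le_flowerValue (h : 0 < flowerExt E z I) :
    ∃ F ∈ flowerCovers E I, flowerExt E z I ≤ flowerValue z F :=
  (le_fold_max _ |>.mp le_rfl).resolve_left h.not_ge

lemma flowerExt_le_of_mem_flowerRel (hz : z ∈ flowerRel E) (hI : I ∈ E ∨ IsSingleton I) :
    flowerExt E z I ≤ z I := by
  refine fold_max_le _ |>.mpr ⟨(hz.1 I hI).1, fun F hF => ?_⟩
  obtain ⟨hFE, hcov, hmeet⟩ := mem_flowerCovers.mp hF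
  rcases hI with hI | ⟨v, rfl⟩
  · let J : Fin F.card → Finset V := fun i => F.equivFin.symm i
    have hsum : ∑ i, (1 - z (J i)) = ∑ K ∈ F, (1 - z K) :=
      (Equiv.sum_comp F.equivFin.symm fun K => 1 - z K).trans (sum_coe_sort F fun K => 1 - z K)
    have hcovJ : I ⊆ univ.biUnion J := fun v hv => by
      obtain ⟨K, hK, hvK⟩ := mem_biUnion.mp (hcov hv)
      exact mem_biUnion.mpr ⟨F.equivFin ⟨K, hK⟩, mem_univ _, by simpa [J] using hvK⟩
    have := hz.2.2 I hI F.card J (fun i => hFE _ (F.equivFin.symm i).2) hcovJ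
      (fun i => hmeet _ (F.equivFin.symm i).2)
    rw [flowerValue]
    linarith
  · obtain ⟨K, hK, hvK⟩ := mem_biUnion.mp (hcov (mem_singleton_self v))
    have hzK : z K ≤ z {v} := by
      rcases hFE K hK with hKE | ⟨u, rfl⟩
      · exact hz.2.1 K hKE v hvK
      · rw [mem_singleton.mp hvK]
    have : 1 - z K ≤ ∑ K ∈ F, (1 - z K) :=
      single_le_sum (fun K hK => sub_nonneg.mpr (hz.1 K (hFE K hK)).2) hK
    rw [flowerValue]
    linarith

lemma flowerExt_eq_of_mem_flowerRel (hz : z ∈ flowerRel E) (hI : I ∈ E ∨ IsSingleton I) :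
    flowerExt E z I = z I := by
  refine (flowerExt_le_of_mem_flowerRel hz hI).antisymm ?_
  rcases I.eq_empty_or_nonempty with rfl | hne
  · have hempty : ∅ ∈ flowerCovers E (∅ : Finset V) := by simp
    have := flowerValue_le_flowerExt (z := z) hempty
    simp only [flowerValue, sum_empty, sub_zero] at this
    linarith [(hz.1 ∅ hI).2]
  · have hself : {I} ∈ flowerCovers E I := by simp [hI, hne]
    simpa [flowerValue] using flowerValue_le_flowerExt (z := z) hself

section

variable (hz : ∀ J, J ∈ E ∨ IsSingleton J → z J ≤ 1)
include hz

lemma one_sub_nonneg_of_mem_flowerCovers (hF : F ∈ flowerCovers E I) : ∀ K ∈ F, 0 ≤ 1 - z K :=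
  fun K hK => sub_nonneg.mpr (hz K ((mem_flowerCovers.mp hF).1 K hK))

lemma flowerExt_le_one : flowerExt E z I ≤ 1 := by
  refine fold_max_le _ |>.mpr ⟨zero_le_one, fun F hF => ?_⟩
  have := sum_nonneg (one_sub_nonneg_of_mem_flowerCovers hz hF)
  rw [flowerValue]
  linarith

lemma flowerExt_anti {J : Finset V} (hJI : J ⊆ I) : flowerExt E z I ≤ flowerExt E z J := by
  refine fold_max_le _ |>.mpr ⟨flowerExt_nonneg, fun F hF => ?_⟩
  obtain ⟨hFE, hcov, -⟩ := mem_flowerCovers.mp hF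
  have hF' : F.filter (fun K => (K ∩ J).Nonempty) ∈ flowerCovers E J := by
    refine mem_flowerCovers.mpr ⟨fun K hK => hFE K (mem_filter.mp hK).1, fun v hv => ?_,
      fun K hK => (mem_filter.mp hK).2⟩
    obtain ⟨K, hK, hvK⟩ := mem_biUnion.mp (hcov (hJI hv))
    exact mem_biUnion.mpr ⟨K, mem_filter.mpr ⟨hK, v, mem_inter.mpr ⟨hvK, hv⟩⟩, hvK⟩
  refine le_trans ?_ (flowerValue_le_flowerExt hF')
  have := sum_le_sum_of_subset_of_nonneg (filter_subset (fun K => (K ∩ J).Nonempty) F)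
    fun K hK _ => one_sub_nonneg_of_mem_flowerCovers hz hF K hK
  rw [flowerValue, flowerValue]
  linarith

lemma one_le_flowerExt_add_sum {P : Finset (Finset V)} (hPI : ∀ J ∈ P, J ⊆ I)
    (hcov : I ⊆ P.biUnion id) : 1 ≤ flowerExt E z I + ∑ J ∈ P, (1 - flowerExt E z J) := by
  have hterm : ∀ J ∈ P, 0 ≤ 1 - flowerExt E z J :=
    fun J _ => sub_nonneg.mpr (flowerExt_le_one hz)
  by_cases hzero : ∃ J₀ ∈ P, flowerExt E z J₀ ≤ 0
  · obtain ⟨J₀, hJ₀, h₀⟩ := hzero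
    have := single_le_sum hterm hJ₀
    linarith [flowerExt_nonneg (E := E) (z := z) (I := I)]
  push Not at hzero
  choose! C hC hCopt using fun J hJ => exists_flowerExt_le_flowerValue (hzero J hJ)
  have hcover : P.biUnion C ∈ flowerCovers E I := by
    refine mem_flowerCovers.mpr ⟨fun K hK => ?_, fun v hv => ?_, fun K hK => ?_⟩
    · obtain ⟨J, hJ, hKJ⟩ := mem_biUnion.mp hK
      exact (mem_flowerCovers.mp (hC J hJ)).1 K hKJ
    · obtain ⟨J, hJ, hvJ⟩ := mem_biUnion.mp (hcov hv)
      obtain ⟨K, hK, hvK⟩ := mem_biUnion.mp ((mem_flowerCovers.mp (hC J hJ)).2.1 hvJ)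
      exact mem_biUnion.mpr ⟨K, mem_biUnion.mpr ⟨J, hJ, hK⟩, hvK⟩
    · obtain ⟨J, hJ, hKJ⟩ := mem_biUnion.mp hK
      exact ((mem_flowerCovers.mp (hC J hJ)).2.2 K hKJ).mono
        (inter_subset_inter_left (hPI J hJ))
  have hunion : ∑ K ∈ P.biUnion C, (1 - z K) ≤ ∑ J ∈ P, ∑ K ∈ C J, (1 - z K) :=
    sum_biUnion_le_sum_sum (one_sub_nonneg_of_mem_flowerCovers hz hcover)
  have hparts : ∑ J ∈ P, ∑ K ∈ C J, (1 - z K) ≤ ∑ J ∈ P, (1 - flowerExt E z J) :=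
    sum_le_sum fun J hJ => by have := hCopt J hJ; rw [flowerValue] at this; linarith
  have := flowerValue_le_flowerExt (z := z) hcover
  rw [flowerValue] at this
  linarith

end

end FlowerExtension

lemma flowerRel_subset_projRelax {V : Type} [Fintype V] [DecidableEq V]
    {E : Finset (Finset V)} (D : RecLin V) : flowerRel E ⊆ projRelax D E := by
  intro z hz
  have hz1 : ∀ J, J ∈ E ∨ IsSingleton J → z J ≤ 1 := fun J hJ => (hz.1 J hJ).2
  refine ⟨flowerExt E z, ⟨fun I _ => ⟨flowerExt_nonneg, flowerExt_le_one hz1⟩,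
    fun a ha => flowerExt_anti hz1 (D.arcs_subset a ha), fun I hI hns => ?_⟩,
    fun I hI => flowerExt_eq_of_mem_flowerRel hz hI⟩
  exact one_le_flowerExt_add_sum hz1 (P := succOf D.arcs I)
    (fun J hJ => D.arcs_subset (I, J) (mem_succOf.mp hJ)) (D.succ_union I hI hns).ge

section SplitLinearization

variable {V : Type} [DecidableEq V]

def IsSplitting (split : Finset V → Finset V) : Prop :=
  ∀ M : Finset V, 1 < M.card → (split M).Nonempty ∧ split M ⊂ M

def SplitChild (split : Finset V → Finset V) (M N : Finset V) : Prop :=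
  1 < M.card ∧ (N = split M ∨ N = M \ split M)

variable {split : Finset V → Finset V}

lemma SplitChild.ssubset (hs : IsSplitting split) {M N : Finset V}
    (h : SplitChild split M N) : N ⊂ M := by
  obtain ⟨hM, rfl | rfl⟩ := h
  · exact (hs M hM).2
  · exact sdiff_ssubset (hs M hM).2.subset (hs M hM).1

lemma SplitChild.nonempty (hs : IsSplitting split) {M N : Finset V}
    (h : SplitChild split M N) : N.Nonempty := by
  obtain ⟨hM, rfl | rfl⟩ := h
  · exact (hs M hM).1
  · exact sdiff_nonempty.mpr (hs M hM).2.not_subset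

lemma split_ne_sdiff (hs : IsSplitting split) {M : Finset V} (h : 1 < M.card) :
    split M ≠ M \ split M := by
  obtain ⟨x, hx⟩ := (hs M h).1
  exact fun heq => (mem_sdiff.mp (heq ▸ hx)).2 hx

variable [Fintype V]

noncomputable def splitNodes (E : Finset (Finset V)) (split : Finset V → Finset V) :
    Finset (Finset V) := by
  classical
  exact univ.filter fun N =>
    IsSingleton N ∨ ∃ I ∈ E, Relation.ReflTransGen (SplitChild split) I N

noncomputable def splitArcs (E : Finset (Finset V)) (split : Finset V → Finset V) :
    Finset (Finset V × Finset V) := by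
  classical
  exact univ.filter fun a => a.1 ∈ splitNodes E split ∧ SplitChild split a.1 a.2

variable {E : Finset (Finset V)}

lemma mem_splitNodes {N : Finset V} : N ∈ splitNodes E split ↔
    IsSingleton N ∨ ∃ I ∈ E, Relation.ReflTransGen (SplitChild split) I N := by
  simp [splitNodes]

lemma mem_splitNodes_of_mem_or_isSingleton {I : Finset V}
    (hI : I ∈ E ∨ IsSingleton I) : I ∈ splitNodes E split := by
  rcases hI with hI | hI
  · exact mem_splitNodes.mpr (.inr ⟨I, hI, .refl⟩)
  · exact mem_splitNodes.mpr (.inl hI)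

lemma mem_splitArcs {a : Finset V × Finset V} :
    a ∈ splitArcs E split ↔ a.1 ∈ splitNodes E split ∧ SplitChild split a.1 a.2 := by
  simp [splitArcs]

lemma nonempty_of_mem_splitNodes (hE : ∀ I ∈ E, I.Nonempty) (hs : IsSplitting split)
    {N : Finset V} (hN : N ∈ splitNodes E split) : N.Nonempty := by
  rcases mem_splitNodes.mp hN with ⟨v, rfl⟩ | ⟨I, hI, hIN⟩
  · exact singleton_nonempty v
  · rcases hIN.cases_tail with rfl | ⟨M, -, hMN⟩
    · exact hE _ hI
    · exact hMN.nonempty hs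

lemma SplitChild.mem_splitNodes {M N : Finset V} (hM : M ∈ splitNodes E split)
    (h : SplitChild split M N) : N ∈ splitNodes E split := by
  rcases _root_.mem_splitNodes.mp hM with ⟨v, rfl⟩ | ⟨I, hI, hIM⟩
  · simp [SplitChild] at h
  · exact _root_.mem_splitNodes.mpr (.inr ⟨I, hI, hIM.tail h⟩)

lemma succOf_splitArcs {M : Finset V} (hM : M ∈ splitNodes E split)
    (h : 1 < M.card) : succOf (splitArcs E split) M = {split M, M \ split M} := by
  ext N
  simp [mem_succOf, mem_splitArcs, hM, SplitChild, h]

noncomputable def mcCormickOf (E : Finset (Finset V)) (hE : ∀ I ∈ E, I.Nonempty)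
    (split : Finset V → Finset V) (hs : IsSplitting split) : RecLin V where
  nodes := splitNodes E split
  arcs := splitArcs E split
  arcs_fst_mem a ha := (mem_splitArcs.mp ha).1
  arcs_snd_mem a ha := (mem_splitArcs.mp ha).2.mem_splitNodes (mem_splitArcs.mp ha).1
  no_loops a ha := ((mem_splitArcs.mp ha).2.ssubset hs).ne'
  singleton_mem v := mem_splitNodes_of_mem_or_isSingleton (.inr ⟨v, rfl⟩)
  nodes_nonempty _ := nonempty_of_mem_splitNodes hE hs
  arcs_subset a ha := ((mem_splitArcs.mp ha).2.ssubset hs).subset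
  succ_union M hM hns := by
    have h := (one_lt_card_iff_not_isSingleton (nonempty_of_mem_splitNodes hE hs hM)).mpr hns
    rw [succOf_splitArcs hM h, biUnion_insert, singleton_biUnion]
    exact union_sdiff_of_subset (hs M h).2.subset

variable (hE : ∀ I ∈ E, I.Nonempty) (hs : IsSplitting split)

lemma mcCormickOf_recLinOf : RecLinOf (mcCormickOf E hE split hs) E := by
  refine ⟨fun I hI => mem_splitNodes_of_mem_or_isSingleton (.inl hI), fun N hN hroot => ?_⟩
  rcases mem_splitNodes.mp hN with hN | ⟨I, hI, hIN⟩
  · exact .inr hN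
  rcases hIN.cases_tail with rfl | ⟨M, hIM, hMN⟩
  · exact .inl hI
  · exact absurd rfl <| hroot (M, N) <| mem_splitArcs.mpr
      ⟨mem_splitNodes.mpr (.inr ⟨I, hI, hIM⟩), hMN⟩

lemma mcCormickOf_mcCormick : McCormick (mcCormickOf E hE split hs) := by
  refine ⟨fun M _ J hJ J' hJ' hne => ?_, fun M hM hns => ?_⟩
  · obtain ⟨-, hJ⟩ : _ ∧ SplitChild split M J := mem_splitArcs.mp (mem_succOf.mp hJ)
    obtain ⟨-, hJ'⟩ : _ ∧ SplitChild split M J' := mem_splitArcs.mp (mem_succOf.mp hJ')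
    obtain ⟨-, rfl | rfl⟩ := hJ <;> obtain ⟨-, rfl | rfl⟩ := hJ' <;>
      simp_all [inter_sdiff_self, sdiff_inter_self]
  · have h := (one_lt_card_iff_not_isSingleton (nonempty_of_mem_splitNodes hE hs hM)).mpr hns
    exact (succOf_splitArcs hM h).symm ▸ card_pair (split_ne_sdiff hs h)

variable {hE hs} {w : Finset V → ℝ} (hw : w ∈ relax (mcCormickOf E hE split hs))
include hw

lemma SplitChild.le_of_mem_relax {M N : Finset V} (hM : M ∈ splitNodes E split)
    (h : SplitChild split M N) : w M ≤ w N :=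
  hw.2.1 (M, N) (mem_splitArcs.mpr ⟨hM, h⟩)

lemma add_sub_one_le_of_mem_relax {M : Finset V} (hM : M ∈ splitNodes E split)
    (h : 1 < M.card) : w (split M) + w (M \ split M) - 1 ≤ w M := by
  have hns : ¬ IsSingleton M := (one_lt_card_iff_not_isSingleton (card_pos.mp (by omega))).mp h
  have := hw.2.2 M hM hns
  rw [show (mcCormickOf E hE split hs).arcs = splitArcs E split from rfl,
    succOf_splitArcs hM h, sum_pair (split_ne_sdiff hs h)] at this
  linarith

end SplitLinearization

section PartitionSplit

open Function

variable {V : Type} [DecidableEq V] {ι : Type*} (K : ι → Finset V)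

open Classical in
noncomputable def partSplit (M : Finset V) : Finset V :=
  if h : ∃ t, (K t ∩ M).Nonempty ∧ K t ∩ M ⊂ M then K h.choose ∩ M
  else if h : M.Nonempty then {h.choose} else ∅

lemma isSplitting_partSplit : IsSplitting (partSplit K) := by
  intro M hM
  unfold partSplit
  split_ifs with h h'
  · exact h.choose_spec
  · refine ⟨singleton_nonempty _, Finset.ssubset_iff_subset_ne.mpr
      ⟨singleton_subset_iff.mpr h'.choose_spec, fun heq => ?_⟩⟩
    rw [← heq, card_singleton] at hM
    exact lt_irrefl _ hM
  · exact absurd (card_pos.mp (by omega)) h'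

variable {K}

lemma exists_partSplit_eq {M : Finset V} (h : ∃ t, (K t ∩ M).Nonempty ∧ K t ∩ M ⊂ M) :
    ∃ s, partSplit K M = K s ∩ M ∧ (K s ∩ M).Nonempty :=
  ⟨h.choose, dif_pos h, h.choose_spec.1⟩

variable [Fintype V] {E : Finset (Finset V)} {hE : ∀ I ∈ E, I.Nonempty}
  {w : Finset V → ℝ} (hK : Pairwise (Disjoint on K))
  (hw : w ∈ relax (mcCormickOf E hE (partSplit K) (isSplitting_partSplit K)))
include hK hw

lemma le_of_part_subset {t : ι} (ht : (K t).Nonempty) {M : Finset V}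
    (hM : M ∈ splitNodes E (partSplit K)) (htM : K t ⊆ M) : w M ≤ w (K t) := by
  induction M using Finset.strongInduction with
  | H M ih =>
  obtain rfl | hlt := eq_or_ssubset_of_subset htM
  · exact le_rfl
  have hM1 : 1 < M.card := lt_of_le_of_lt ht.card_pos (card_lt_card hlt)
  obtain ⟨s, hs, -⟩ := exists_partSplit_eq ⟨t, by rwa [inter_eq_left.mpr htM], by
    rwa [inter_eq_left.mpr htM]⟩
  by_cases hst : s = t
  · subst hst
    have hchild : SplitChild (partSplit K) M (K s) :=
      ⟨hM1, .inl (by rw [hs, inter_eq_left.mpr htM])⟩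
    exact hchild.le_of_mem_relax hw hM
  · have hchild : SplitChild (partSplit K) M (M \ partSplit K M) := ⟨hM1, .inr rfl⟩
    have hsub : K t ⊆ M \ partSplit K M := by
      rw [hs, sdiff_inter_self_right]
      exact subset_sdiff.mpr ⟨htM, (hK hst).symm⟩
    exact (hchild.le_of_mem_relax hw hM).trans
      (ih _ (hchild.ssubset (isSplitting_partSplit K)) (hchild.mem_splitNodes hM) hsub)

lemma one_sub_sum_le_of_biUnion_eq {T : Finset ι} (hT : T.Nonempty)
    (hTK : ∀ s ∈ T, (K s).Nonempty) {M : Finset V} (hM : M ∈ splitNodes E (partSplit K))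
    (hTM : T.biUnion K = M) : 1 - ∑ s ∈ T, (1 - w (K s)) ≤ w M := by
  classical
  induction T using Finset.strongInduction generalizing M with
  | H T ih =>
  obtain ⟨s, rfl⟩ | hnt := hT.exists_eq_singleton_or_nontrivial
  · simp only [singleton_biUnion] at hTM
    simp [hTM]
  obtain ⟨s₁, hs₁, s₂, hs₂, hs₁₂⟩ := id hnt
  have hsubM : ∀ s ∈ T, K s ⊆ M := fun s hs => hTM ▸ subset_biUnion_of_mem K hs
  have hcut : (K s₁ ∩ M).Nonempty ∧ K s₁ ∩ M ⊂ M := by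
    rw [inter_eq_left.mpr (hsubM s₁ hs₁)]
    refine ⟨hTK s₁ hs₁, Finset.ssubset_iff_subset_ne.mpr ⟨hsubM s₁ hs₁, fun heq => ?_⟩⟩
    obtain ⟨x, hx⟩ := hTK s₂ hs₂
    exact disjoint_left.mp (hK hs₁₂) (heq ▸ hsubM s₂ hs₂ hx) hx
  obtain ⟨s, hsplit, x, hx⟩ := exists_partSplit_eq ⟨s₁, hcut⟩
  obtain ⟨hxs, hxM⟩ := mem_inter.mp hx
  have hsT : s ∈ T := by
    obtain ⟨r, hr, hxr⟩ := mem_biUnion.mp (hTM ▸ hxM)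
    by_contra hsT
    exact disjoint_left.mp (hK (ne_of_mem_of_not_mem hr hsT).symm) hxs hxr
  rw [inter_eq_left.mpr (hsubM s hsT)] at hsplit
  have hrest : (T.erase s).biUnion K = M \ partSplit K M := by
    rw [hsplit, ← hTM, ← insert_erase hsT, biUnion_insert, erase_insert (notMem_erase s T)]
    refine (union_sdiff_cancel_left ?_).symm
    exact (disjoint_biUnion_right _ _ _).mpr fun r hr => hK (ne_of_mem_erase hr).symm
  have hM1 : 1 < M.card := lt_of_le_of_lt hcut.1.card_pos (card_lt_card hcut.2)
  have hchild : SplitChild (partSplit K) M (M \ partSplit K M) := ⟨hM1, .inr rfl⟩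
  have hIH := ih (T.erase s) (erase_ssubset hsT) hnt.erase_nonempty
    (fun r hr => hTK r (mem_of_mem_erase hr)) (hchild.mem_splitNodes hM) hrest
  have hmc := add_sub_one_le_of_mem_relax hw hM hM1
  rw [hsplit] at hmc hIH
  rw [← add_sum_erase T _ hsT]
  linarith

end PartitionSplit

section McCormickIntersection

open Function

variable {V : Type} [Fintype V] [DecidableEq V] {E : Finset (Finset V)}
  (hE : ∀ I ∈ E, I.Nonempty) {z : Finset V → ℝ}
  (hz : ∀ D : RecLin V, RecLinOf D E ∧ McCormick D → z ∈ projRelax D E)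
include hE hz

lemma flower_ineq_of_forall_mcCormick {I : Finset V} (hI : I ∈ E) {k : ℕ}
    {J : Fin k → Finset V} (hJ : ∀ i, J i ∈ E ∨ IsSingleton (J i))
    (hcov : I ⊆ univ.biUnion J) : z I + ∑ i, (1 - z (J i)) ≥ 1 := by
  set K := disjointed fun i => J i ∩ I
  have hK : Pairwise (Disjoint on K) := disjoint_disjointed _
  have hKJ : ∀ i, K i ⊆ J i := fun i => (disjointed_le _ i).trans inter_subset_left
  set T := univ.filter fun i => (K i).Nonempty
  have hTI : T.biUnion K = I := by
    have hunion : univ.biUnion (fun i => J i ∩ I) = I := by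
      ext x
      simpa using fun hx => mem_biUnion.mp (hcov hx)
    have hdisj : univ.biUnion K = univ.biUnion (fun i => J i ∩ I) := by
      simpa only [sup_eq_biUnion] using Fintype.sup_disjointed fun i => J i ∩ I
    rw [← hunion, ← hdisj]
    ext x
    simp only [mem_biUnion, mem_filter, mem_univ, true_and, T]
    exact ⟨fun ⟨i, _, hx⟩ => ⟨i, hx⟩, fun ⟨i, hx⟩ => ⟨i, ⟨x, hx⟩, hx⟩⟩
  have hT : T.Nonempty := (biUnion_nonempty.mp (hTI ▸ hE I hI)).imp fun _ hi => hi.1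
  obtain ⟨w, hw, hwz⟩ := hz _ ⟨mcCormickOf_recLinOf hE (isSplitting_partSplit K),
    mcCormickOf_mcCormick hE (isSplitting_partSplit K)⟩
  have hspine := one_sub_sum_le_of_biUnion_eq hK hw hT (fun i hi => (mem_filter.mp hi).2)
    (mem_splitNodes_of_mem_or_isSingleton (.inl hI)) hTI
  have hparts : ∑ i ∈ T, (1 - w (K i)) ≤ ∑ i ∈ T, (1 - z (J i)) := by
    refine sum_le_sum fun i hi => ?_
    have := le_of_part_subset hK hw (mem_filter.mp hi).2
      (mem_splitNodes_of_mem_or_isSingleton (hJ i)) (hKJ i)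
    rw [← hwz _ (hJ i)]
    linarith
  have hrest : ∑ i ∈ T, (1 - z (J i)) ≤ ∑ i, (1 - z (J i)) :=
    sum_le_sum_of_subset_of_nonneg (subset_univ T) fun i _ _ => sub_nonneg.mpr <|
      hwz _ (hJ i) ▸ (hw.1 _ (mem_splitNodes_of_mem_or_isSingleton (hJ i))).2
  rw [← hwz I (.inl hI)]
  linarith

lemma mem_flowerRel_of_forall_mcCormick : z ∈ flowerRel E := by
  let K : V → Finset V := fun v => {v}
  have hK : Pairwise (Disjoint on K) := fun _ _ huv => disjoint_singleton.mpr huv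
  obtain ⟨w, hw, hwz⟩ := hz _ ⟨mcCormickOf_recLinOf hE (isSplitting_partSplit K),
    mcCormickOf_mcCormick hE (isSplitting_partSplit K)⟩
  refine ⟨fun I hI => hwz I hI ▸ hw.1 I (mem_splitNodes_of_mem_or_isSingleton hI),
    fun I hI v hv => ?_, fun I hI k J hJ hcov _ => flower_ineq_of_forall_mcCormick hE hz hI hJ hcov⟩
  rw [← hwz I (.inl hI), ← hwz {v} (.inr ⟨v, rfl⟩)]
  exact le_of_part_subset hK hw (singleton_nonempty v)
    (mem_splitNodes_of_mem_or_isSingleton (.inl hI)) (singleton_subset_iff.mpr hv)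

end McCormickIntersection

/-- the extended flower relaxation, the intersection of the projected
relaxations of all recursive linearizations of `G`, and the intersection of the
projected relaxations of all recursive McCormick linearizations of `G`, coincide. -/
theorem flower_eq_intersections {V : Type} [Fintype V] [DecidableEq V]
    (E : Finset (Finset V)) (hE : ∀ I ∈ E, 2 ≤ I.card) :
    flowerRel E = { z | ∀ D : RecLin V, RecLinOf D E → z ∈ projRelax D E }
    ∧ flowerRel E
        = { z | ∀ D : RecLin V, RecLinOf D E ∧ McCormick D → z ∈ projRelax D E } := by
  have hne : ∀ I ∈ E, I.Nonempty := fun I hI => card_pos.mp (by linarith [hE I hI])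
  have hall : flowerRel E ⊆ { z | ∀ D : RecLin V, RecLinOf D E → z ∈ projRelax D E } :=
    fun z hz D _ => flowerRel_subset_projRelax D hz
  have hmc : { z | ∀ D : RecLin V, RecLinOf D E → z ∈ projRelax D E } ⊆
      { z | ∀ D : RecLin V, RecLinOf D E ∧ McCormick D → z ∈ projRelax D E } :=
    fun z hz D hD => hz D hD.1
  have hflower : { z | ∀ D : RecLin V, RecLinOf D E ∧ McCormick D → z ∈ projRelax D E } ⊆
      flowerRel E :=
    fun z hz => mem_flowerRel_of_forall_mcCormick hne hz
  exact ⟨hall.antisymm (hmc.trans hflower), (hall.trans hmc).antisymm hflower⟩
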